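/- arXiv:2601.22200 — 2 statements merged into one kernel-verified Lean document; each statement's English description precedes it below -/
import Mathlib

section
/- Greville rank-increasing update: let R ∈ ℝ^{m×n}, z ∈ ℝ^n, and suppose c = (I − R†R) z ≠ 0. Then the Moore–Penrose pseudoinverse of the row-augmented matrix [R; zᵀ] is the block matrix [R† − c‡ zᵀR† , c‡] where c‡ = c/‖c‖² (viewed as an n×1 column appended on the right of the n×m block). -/
open Matrix

/-- The four Penrose conditions: `B` is the Moore–Penrose pseudoinverse of `A`. -/
def IsMoorePenrose {m n : Type*} [Fintype m] [Fintype n]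
    (A : Matrix m n ℝ) (B : Matrix n m ℝ) : Prop :=
  A * B * A = A ∧ B * A * B = B ∧ (A * B)ᵀ = A * B ∧ (B * A)ᵀ = B * A

/-!
Appending the row `zᵀ` to `A` and the column `d` to `B − d (zᵀB)` keeps the Penrose conditions
when `A d = 0`, `zᵀ d = 1` and the rank-one matrix `d zᵀ(I − BA)` is symmetric: the new `AB` is
`diag(AB, 1)` and the new `BA` is `BA + d zᵀ(I − BA)`. For `c = (I − BA) z` one has `A c = 0` and
`zᵀ c = cᵀ c`, so `d = c / ‖c‖²` qualifies, the rank-one matrix being `c cᵀ / ‖c‖²`.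
-/

namespace IsMoorePenrose

variable {m n : Type*} [Fintype m] [Fintype n] {A : Matrix m n ℝ} {B : Matrix n m ℝ}

theorem vecMul_mul_eq_mulVec (h : IsMoorePenrose A B) (z : n → ℝ) :
    z ᵥ* (B * A) = (B * A) *ᵥ z := by
  rw [← vecMul_transpose, h.2.2.2]

theorem mulVec_sub_mulVec_mul (h : IsMoorePenrose A B) (z : n → ℝ) :
    A *ᵥ (z - (B * A) *ᵥ z) = 0 := by
  rw [mulVec_sub, mulVec_mulVec, ← Matrix.mul_assoc, h.1, sub_self]

theorem dotProduct_sub_mulVec_mul (h : IsMoorePenrose A B) (z : n → ℝ) :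
    z ⬝ᵥ (z - (B * A) *ᵥ z) = (z - (B * A) *ᵥ z) ⬝ᵥ (z - (B * A) *ᵥ z) := by
  set c := z - (B * A) *ᵥ z
  have hPc : (B * A) *ᵥ c = 0 := by
    rw [← mulVec_mulVec, h.mulVec_sub_mulVec_mul, mulVec_zero]
  have hPz_c : ((B * A) *ᵥ z) ⬝ᵥ c = 0 := by
    rw [dotProduct_comm, dotProduct_mulVec, h.vecMul_mul_eq_mulVec, hPc, zero_dotProduct]
  calc z ⬝ᵥ c = (c + (B * A) *ᵥ z) ⬝ᵥ c := by rw [sub_add_cancel]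
    _ = c ⬝ᵥ c := by rw [add_dotProduct, hPz_c, add_zero]

theorem fromRows_replicateRow {z d : n → ℝ} (h : IsMoorePenrose A B) (hAd : A *ᵥ d = 0)
    (hzd : z ⬝ᵥ d = 1)
    (hsymm : (vecMulVec d (z - z ᵥ* (B * A)))ᵀ = vecMulVec d (z - z ᵥ* (B * A))) :
    IsMoorePenrose (fromRows A (replicateRow (Fin 1) z))
      (fromCols (B - vecMulVec d (z ᵥ* B)) (replicateCol (Fin 1) d)) := by
  obtain ⟨h₁, h₂, h₃, h₄⟩ := h
  set Z := replicateRow (Fin 1) z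
  set D := replicateCol (Fin 1) d
  set B' := B - vecMulVec d (z ᵥ* B)
  have hAD : A * D = 0 := by
    rw [← replicateCol_mulVec, hAd]; rfl
  have hZD : Z * D = 1 := by
    rw [replicateRow_mul_replicateCol, hzd]
    ext i j; simp [one_apply, Subsingleton.elim i j]
  have hAB' : A * B' = A * B := by
    rw [Matrix.mul_sub, mul_vecMulVec, hAd, zero_vecMulVec, sub_zero]
  have hZB' : Z * B' = 0 := by
    rw [Matrix.mul_sub, ← replicateRow_vecMul, ← replicateRow_vecMul, vecMul_vecMulVec, hzd,
      one_smul, sub_self]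
  have hB'AB : B' * (A * B) = B' := by
    rw [Matrix.sub_mul, vecMulVec_mul, vecMul_vecMul, ← Matrix.mul_assoc, h₂]
  have hAB : fromRows A Z * fromCols B' D = fromBlocks (A * B) 0 0 1 := by
    rw [fromRows_mul_fromCols, hAB', hAD, hZB', hZD]
  have hBA : fromCols B' D * fromRows A Z = B * A + vecMulVec d (z - z ᵥ* (B * A)) := by
    have hDZ : D * Z = vecMulVec d z := (vecMulVec_eq (Fin 1) d z).symm
    rw [fromCols_mul_fromRows, hDZ, Matrix.sub_mul, vecMulVec_mul, vecMul_vecMul,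
      vecMulVec_sub]
    abel
  refine ⟨?_, ?_, ?_, ?_⟩
  · rw [hAB, fromBlocks_mul_fromRows, h₁]
    simp
  · rw [Matrix.mul_assoc, hAB, fromCols_mul_fromBlocks, hB'AB]
    simp
  · rw [hAB, fromBlocks_transpose, h₃]
    simp
  · rw [hBA, transpose_add, h₄, hsymm]

end IsMoorePenrose

/-- Greville rank-increasing update: if `c = (I − R†R)z ≠ 0`, then the pseudoinverse of
the row-augmented matrix `[R; zᵀ]` is the block matrix `[R† − c‡ zᵀR† , c‡]` where
`c‡ = c/‖c‖²`. -/
theorem greville_rank_increasing {m n : ℕ}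
    (R : Matrix (Fin m) (Fin n) ℝ) (Rp : Matrix (Fin n) (Fin m) ℝ)
    (hR : IsMoorePenrose R Rp) (z : Fin n → ℝ)
    (c : Fin n → ℝ) (hc : c = z - (Rp * R).mulVec z) (hc0 : c ≠ 0) :
    IsMoorePenrose
      (fromRows R (Matrix.of fun _ : Fin 1 => z))
      (fromCols
        (Rp - vecMulVec ((∑ i, c i ^ 2)⁻¹ • c) (vecMul z Rp))
        (Matrix.of fun i (_ : Fin 1) => (∑ i, c i ^ 2)⁻¹ * c i)) := by
  have hs : ∑ i, c i ^ 2 = c ⬝ᵥ c := by simp only [dotProduct, sq]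
  have hs0 : c ⬝ᵥ c ≠ 0 := dotProduct_self_eq_zero.not.mpr hc0
  have hRc : R *ᵥ c = 0 := hc ▸ hR.mulVec_sub_mulVec_mul z
  have hzc : z ⬝ᵥ c = c ⬝ᵥ c := hc ▸ hR.dotProduct_sub_mulVec_mul z
  have hcz : z - z ᵥ* (Rp * R) = c := by rw [hR.vecMul_mul_eq_mulVec, hc]
  rw [hs]
  refine hR.fromRows_replicateRow (d := (c ⬝ᵥ c)⁻¹ • c) ?_ ?_ ?_
  · rw [mulVec_smul, hRc, smul_zero]
  · rw [dotProduct_smul, hzc, smul_eq_mul, inv_mul_cancel₀ hs0]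
  · rw [hcz, transpose_vecMulVec, smul_vecMulVec, vecMulVec_smul]
end

section
/- Greville rank-preserving update: let R ∈ ℝ^{m×n}, z ∈ ℝ^n with z in the row space of R, i.e. (I − R†R)z = 0. Set h = zᵀR† ∈ ℝ^{1×m} and b = R†hᵀ/(1 + hhᵀ). Then the pseudoinverse of [R; zᵀ] equals [R† − b h , b]. -/
/-! Since `z` lies in the row space of `R`, `zᵀ = h R`, so `[R; zᵀ] = E R` with `E = [I; h]`.
By Sherman–Morrison `M = I − hᵀh / (1 + hhᵀ)` inverts `EᵀE = I + hᵀh`, so `M Eᵀ` is a left inverse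
of `E`. The reverse-order law `(E R)† = R† M Eᵀ` then holds because `R R†` commutes with `M`, which
follows from `R R† hᵀ = hᵀ`. Expanding `R† M Eᵀ` gives `[R† − b h, b]`. -/

open Matrix

section

variable {α k l p ι : Type*} [Fintype k] [Fintype l] [Fintype p]

theorem commute_vecMulVec_self [CommSemiring α] {P : Matrix k k α} {h : k → α}
    (hP : Pᵀ = P) (hPh : P *ᵥ h = h) : Commute P (vecMulVec h h) := by
  rw [Commute, SemiconjBy, mul_vecMulVec, vecMulVec_mul, ← mulVec_transpose, hP, hPh]

theorem one_sub_inv_smul_vecMulVec_mul_one_add_vecMulVec [Field α] [DecidableEq k] {h : k → α}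
    (hs : 1 + h ⬝ᵥ h ≠ 0) :
    (1 - (1 + h ⬝ᵥ h)⁻¹ • vecMulVec h h) * (1 + vecMulVec h h) = 1 := by
  have hsq : vecMulVec h h * vecMulVec h h = (h ⬝ᵥ h) • vecMulVec h h := by
    rw [vecMulVec_mul_vecMulVec, vecMulVec_smul]
  calc _ = 1 + vecMulVec h h - ((1 + h ⬝ᵥ h)⁻¹ * (1 + h ⬝ᵥ h)) • vecMulVec h h := by
        rw [Matrix.sub_mul, Matrix.one_mul, Matrix.smul_mul, Matrix.mul_add, Matrix.mul_one, hsq,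
          mul_smul, add_smul, one_smul]
    _ = 1 := by rw [inv_mul_cancel₀ hs, one_smul, add_sub_cancel_right]

theorem one_sub_inv_smul_vecMulVec_mulVec [Field α] [DecidableEq k] {h : k → α}
    (hs : 1 + h ⬝ᵥ h ≠ 0) :
    (1 - (1 + h ⬝ᵥ h)⁻¹ • vecMulVec h h) *ᵥ h = (1 + h ⬝ᵥ h)⁻¹ • h := by
  rw [sub_mulVec, one_mulVec, smul_mulVec, vecMulVec_mulVec, op_smul_eq_smul]
  calc h - (1 + h ⬝ᵥ h)⁻¹ • (h ⬝ᵥ h) • h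
      = ((1 + h ⬝ᵥ h)⁻¹ * (1 + h ⬝ᵥ h) - (1 + h ⬝ᵥ h)⁻¹ * (h ⬝ᵥ h)) • h := by
        rw [inv_mul_cancel₀ hs, sub_smul, one_smul, mul_smul]
    _ = (1 + h ⬝ᵥ h)⁻¹ • h := by rw [← mul_sub, add_sub_cancel_right, mul_one]

theorem transpose_fromRows_one_replicateRow_mul_self [CommSemiring α] [DecidableEq k]
    [Fintype ι] [Unique ι] (h : k → α) :
    (fromRows (1 : Matrix k k α) (replicateRow ι h))ᵀ * fromRows (1 : Matrix k k α)
      (replicateRow ι h) = 1 + vecMulVec h h := by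
  rw [transpose_fromRows, fromCols_mul_fromRows, transpose_one, Matrix.one_mul,
    transpose_replicateRow]
  congr 1
  ext i j
  simp only [mul_apply, Fintype.sum_unique, replicateCol_apply, replicateRow_apply,
    vecMulVec_apply]

omit [Fintype l] in
theorem fromRows_one_replicateRow_mul [Semiring α] [DecidableEq k] (h : k → α)
    (R : Matrix k l α) :
    fromRows 1 (replicateRow ι h) * R = fromRows R (replicateRow ι (h ᵥ* R)) := by
  rw [fromRows_mul, Matrix.one_mul, replicateRow_vecMul]

omit [Fintype l] in
theorem mul_transpose_fromRows_one_replicateRow [CommSemiring α] [DecidableEq k]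
    (M : Matrix l k α) (h : k → α) :
    M * (fromRows (1 : Matrix k k α) (replicateRow ι h))ᵀ =
      fromCols M (replicateCol ι (M *ᵥ h)) := by
  rw [transpose_fromRows, transpose_one, transpose_replicateRow, mul_fromCols, Matrix.mul_one,
    replicateCol_mulVec]

namespace IsMoorePenrose

variable {R : Matrix k l ℝ} {Rp : Matrix l k ℝ}

theorem mul_mulVec_vecMul (hR : IsMoorePenrose R Rp) (z : l → ℝ) :
    (R * Rp) *ᵥ (z ᵥ* Rp) = z ᵥ* Rp := by
  rw [← vecMul_transpose, hR.2.2.1, vecMul_vecMul, ← Matrix.mul_assoc, hR.2.1]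

theorem vecMul_vecMul_of_mulVec_eq (hR : IsMoorePenrose R Rp) {z : l → ℝ}
    (hz : (Rp * R) *ᵥ z = z) : z ᵥ* Rp ᵥ* R = z := by
  rw [vecMul_vecMul, ← hR.2.2.2, vecMul_transpose, hz]

theorem mul_of_commute [DecidableEq k] (hR : IsMoorePenrose R Rp) {E : Matrix p k ℝ}
    {M : Matrix k k ℝ} (hM : Mᵀ = M) (hME : M * (Eᵀ * E) = 1) (hcomm : Commute (R * Rp) M) :
    IsMoorePenrose (E * R) (Rp * (M * Eᵀ)) := by
  obtain ⟨h1, h2, h3, h4⟩ := hR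
  have hBA : Rp * (M * Eᵀ) * (E * R) = Rp * R := by
    rw [show Rp * (M * Eᵀ) * (E * R) = Rp * (M * (Eᵀ * E)) * R by simp only [Matrix.mul_assoc],
      hME, Matrix.mul_one]
  have hAB : E * R * (Rp * (M * Eᵀ)) = E * (R * Rp * M) * Eᵀ := by simp only [Matrix.mul_assoc]
  refine ⟨?_, ?_, ?_, ?_⟩
  · rw [Matrix.mul_assoc, hBA, Matrix.mul_assoc, ← Matrix.mul_assoc R, h1]
  · rw [hBA, ← Matrix.mul_assoc, h2]
  · rw [hAB, transpose_mul, transpose_mul, transpose_transpose, transpose_mul, hM, h3,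
      ← hcomm.eq]
    simp only [Matrix.mul_assoc]
  · rw [hBA, h4]

end IsMoorePenrose

end

/-- Greville rank-preserving update: if `z` lies in the row space of `R`
(`(I − R†R)z = 0`), set `h = zᵀR†` and `b = R†hᵀ/(1 + hhᵀ)`.  Then the pseudoinverse
of the row-augmented matrix `[R; zᵀ]` equals `[R† − b h , b]`. -/
theorem greville_rank_preserving {m n : ℕ}
    (R : Matrix (Fin m) (Fin n) ℝ) (Rp : Matrix (Fin n) (Fin m) ℝ)
    (hR : IsMoorePenrose R Rp) (z : Fin n → ℝ)
    (hz : (Rp * R).mulVec z = z)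
    (h : Fin m → ℝ) (hh : h = vecMul z Rp)
    (b : Fin n → ℝ) (hb : b = (1 + h ⬝ᵥ h)⁻¹ • Rp.mulVec h) :
    IsMoorePenrose
      (fromRows R (Matrix.of fun _ : Fin 1 => z))
      (fromCols (Rp - vecMulVec b h) (Matrix.of fun i (_ : Fin 1) => b i)) := by
  have hs : 1 + h ⬝ᵥ h ≠ 0 :=
    (add_pos_of_pos_of_nonneg one_pos (star_trivial h ▸ dotProduct_star_self_nonneg h)).ne'
  have hPh : (R * Rp) *ᵥ h = h := hh ▸ hR.mul_mulVec_vecMul z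
  set M : Matrix (Fin m) (Fin m) ℝ := 1 - (1 + h ⬝ᵥ h)⁻¹ • vecMulVec h h with hM
  set E : Matrix (Fin m ⊕ Fin 1) (Fin m) ℝ := fromRows 1 (replicateRow (Fin 1) h)
    with hE
  have hMt : Mᵀ = M := by rw [transpose_sub, transpose_one, transpose_smul, transpose_vecMulVec]
  have key := hR.mul_of_commute (E := E) hMt
    (by rw [hE, transpose_fromRows_one_replicateRow_mul_self,
      one_sub_inv_smul_vecMulVec_mul_one_add_vecMulVec hs])
    ((Commute.one_right _).sub_right ((commute_vecMulVec_self hR.2.2.1 hPh).smul_right _))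
  have hA : E * R = fromRows R (replicateRow (Fin 1) z) := by
    rw [hE, fromRows_one_replicateRow_mul, hh, hR.vecMul_vecMul_of_mulVec_eq hz]
  have hB : Rp * (M * Eᵀ) = fromCols (Rp - vecMulVec b h) (replicateCol (Fin 1) b) := by
    rw [hE, mul_transpose_fromRows_one_replicateRow, one_sub_inv_smul_vecMulVec_mulVec hs,
      mul_fromCols, ← replicateCol_mulVec, hM, Matrix.mul_sub, Matrix.mul_one, Matrix.mul_smul,
      mul_vecMulVec, ← smul_vecMulVec, mulVec_smul, ← hb]
  rwa [hA, hB] at key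
end
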